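/- Let R be a positive trace-class operator on a Hilbert space H and P_1,…,P_N orthogonal projections with pairwise orthogonal ranges summing to I. Define the HS-greedy sequence R^{(0)} = R, D_k = (R^{(k-1)})^{1/2} P_{j_k} (R^{(k-1)})^{1/2} where j_k maximizes the Hilbert-Schmidt norm ‖(R^{(k-1)})^{1/2} P_j (R^{(k-1)})^{1/2}‖₂ over j, and R^{(k)} = R^{(k-1)} − D_k. Then for every k ≥ 1, ‖R^{(k)}‖₂² ≤ (1 − 1/N²)^k ‖R‖₂². -/

import Mathlib

/-!
Write `A = R⁽ᵏ⁾`, `S = √A` and `D = S P S` for the greedy projection `P`. Then `A - D = S (1 - P) S`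
is positive, and the Hilbert–Schmidt inner product of two positive operators is nonnegative
(`tr (C D) = tr (√D C √D)` by cyclicity), so `‖A - D‖₂² ≤ ‖A‖₂² - ‖D‖₂²`. Since
`A = ∑ⱼ S Pⱼ S` has `N` terms, `‖A‖₂² ≤ N ∑ⱼ ‖S Pⱼ S‖₂² ≤ N² ‖D‖₂²` by the greedy choice, and each
step contracts `‖·‖₂²` by `1 - 1/N²`. The trace-class hypothesis is what makes `√A` Hilbert–Schmidt;
it propagates along the sequence because `0 ≤ R⁽ᵏ⁺¹⁾ ≤ R⁽ᵏ⁾`.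
-/

noncomputable section

variable {H : Type*} [NormedAddCommGroup H] [InnerProductSpace ℂ H] [CompleteSpace H]

open scoped InnerProductSpace
open Finset RCLike

section CStarAlgebra

variable {𝒜 : Type*} [CStarAlgebra 𝒜] [PartialOrder 𝒜] [StarOrderedRing 𝒜] {a p : 𝒜}

theorem sqrt_mul_mul_sqrt_nonneg (hp : IsStarProjection p) : 0 ≤ CFC.sqrt a * p * CFC.sqrt a :=
  (IsSelfAdjoint.of_nonneg (CFC.sqrt_nonneg a)).conjugate_nonneg hp.nonneg

theorem sqrt_mul_mul_sqrt_le (ha : 0 ≤ a) (hp : IsStarProjection p) :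
    CFC.sqrt a * p * CFC.sqrt a ≤ a := by
  have hp1 : p ≤ 1 := sub_nonneg.1 hp.one_sub.nonneg
  simpa only [mul_one, CFC.sqrt_mul_sqrt_self a ha] using
    (IsSelfAdjoint.of_nonneg (CFC.sqrt_nonneg a)).conjugate_le_conjugate hp1

theorem sub_sqrt_mul_mul_sqrt_nonneg (ha : 0 ≤ a) (hp : IsStarProjection p) :
    0 ≤ a - CFC.sqrt a * p * CFC.sqrt a :=
  sub_nonneg.2 (sqrt_mul_mul_sqrt_le ha hp)

end CStarAlgebra

theorem norm_sqrt_apply_sq {A : H →L[ℂ] H} (hA : 0 ≤ A) (x : H) :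
    ‖CFC.sqrt A x‖ ^ 2 = re ⟪x, A x⟫_ℂ := by
  have hS := (ContinuousLinearMap.nonneg_iff_isPositive _).1 (CFC.sqrt_nonneg A)
  conv_rhs => rw [← CFC.sqrt_mul_sqrt_self A hA, mul_apply_eq_comp,
    ← hS.inner_left_eq_inner_right]
  exact (inner_self_eq_norm_sq _).symm

namespace HilbertBasis

section RCLike

variable {𝕜 E ι : Type*} [RCLike 𝕜] [NormedAddCommGroup E] [InnerProductSpace 𝕜 E]
  (b : HilbertBasis ι 𝕜 E)

def IsHilbertSchmidt (T : E →L[𝕜] E) : Prop := Summable fun i => ‖T (b i)‖ ^ 2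

def hsNormSq (T : E →L[𝕜] E) : ℝ := ∑' i, ‖T (b i)‖ ^ 2

-- For `0 ≤ A` this is the trace-class condition, and then `∑' i, re ⟪b i, A (b i)⟫` is `tr A`.
def SummableDiag (A : E →L[𝕜] E) : Prop := Summable fun i => re ⟪b i, A (b i)⟫_𝕜

theorem hasSum_norm_inner_sq (x : E) : HasSum (fun i => ‖⟪b i, x⟫_𝕜‖ ^ 2) (‖x‖ ^ 2) := by
  have h := b.hasSum_inner_mul_inner x x
  have hterm : ∀ i, ⟪x, b i⟫_𝕜 * ⟪b i, x⟫_𝕜 = ((‖⟪b i, x⟫_𝕜‖ ^ 2 : ℝ) : 𝕜) := fun i => by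
    rw [← inner_conj_symm x, RCLike.conj_mul]; norm_cast
  simp only [hterm, inner_self_eq_norm_sq_to_K] at h
  exact_mod_cast h

theorem hasSum_inner_apply_mul (X : E →L[𝕜] E) (x y : E) :
    HasSum (fun j => ⟪x, X (b j)⟫_𝕜 * ⟪b j, y⟫_𝕜) ⟪x, X y⟫_𝕜 := by
  simpa [b.repr_apply_apply, inner_smul_right, mul_comm] using
    (b.hasSum_repr y).mapL ((innerSL 𝕜 x).comp X)

variable {b}

theorem IsHilbertSchmidt.mul_left {T : E →L[𝕜] E} (hT : b.IsHilbertSchmidt T) (C : E →L[𝕜] E) :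
    b.IsHilbertSchmidt (C * T) := by
  refine .of_nonneg_of_le (fun i => by positivity) (fun i => ?_) (Summable.mul_left (‖C‖ ^ 2) hT)
  rw [← mul_pow]
  exact pow_le_pow_left₀ (norm_nonneg _) (C.le_opNorm _) 2

theorem IsHilbertSchmidt.summable_norm_mul_norm {S T : E →L[𝕜] E} (hS : b.IsHilbertSchmidt S)
    (hT : b.IsHilbertSchmidt T) : Summable fun i => ‖S (b i)‖ * ‖T (b i)‖ :=
  .of_nonneg_of_le (fun i => by positivity)
    (fun i => by nlinarith [two_mul_le_add_sq ‖S (b i)‖ ‖T (b i)‖])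
    (Summable.mul_left (1 / 2) (Summable.add hS hT))

theorem hasSum_inner_mul_comm {X Y : E →L[𝕜] E} (hX : b.IsHilbertSchmidt X)
    (hY : b.IsHilbertSchmidt Y) :
    HasSum (fun i => ⟪b i, (X * Y) (b i)⟫_𝕜) (∑' i, ⟪b i, (Y * X) (b i)⟫_𝕜) := by
  set f : ι × ι → 𝕜 := fun p => ⟪b p.1, X (b p.2)⟫_𝕜 * ⟪b p.2, Y (b p.1)⟫_𝕜
  have hrow : ∀ i, HasSum (fun j => f (i, j)) ⟪b i, (X * Y) (b i)⟫_𝕜 := fun i =>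
    b.hasSum_inner_apply_mul X (b i) (Y (b i))
  have hcol : ∀ j, HasSum (fun i => f (i, j)) ⟪b j, (Y * X) (b j)⟫_𝕜 := fun j => by
    simpa [f, mul_comm] using b.hasSum_inner_apply_mul Y (b j) (X (b j))
  -- By Parseval both factors of `f` are square summable on `ι × ι`.
  have hsq : ∀ T : E →L[𝕜] E, b.IsHilbertSchmidt T →
      Summable fun p : ι × ι => ‖⟪b p.2, T (b p.1)⟫_𝕜‖ ^ 2 := fun T hT =>
    (summable_prod_of_nonneg fun _ => sq_nonneg _).2
      ⟨fun i => (b.hasSum_norm_inner_sq (T (b i))).summable,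
        Summable.congr hT fun i => (b.hasSum_norm_inner_sq (T (b i))).tsum_eq.symm⟩
  have hf : Summable f := by
    refine .of_norm (.of_nonneg_of_le (fun _ => norm_nonneg _) (fun p => ?_)
      (Summable.mul_left (1 / 2) (((hsq X hX).prod_symm.add (hsq Y hY)))))
    simp only [f, norm_mul, Prod.fst_swap, Prod.snd_swap]
    nlinarith [two_mul_le_add_sq ‖⟪b p.1, X (b p.2)⟫_𝕜‖ ‖⟪b p.2, Y (b p.1)⟫_𝕜‖]
  convert hf.hasSum.prod_fiberwise hrow using 1
  rw [(hf.prod_symm.hasSum.prod_fiberwise hcol).tsum_eq]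
  exact (Equiv.prodComm ι ι).tsum_eq f

theorem hsNormSq_add {S T : E →L[𝕜] E} (hS : b.IsHilbertSchmidt S) (hT : b.IsHilbertSchmidt T) :
    b.hsNormSq (S + T) = b.hsNormSq S + 2 * ∑' i, re ⟪S (b i), T (b i)⟫_𝕜 + b.hsNormSq T := by
  have hcross : Summable fun i => re ⟪S (b i), T (b i)⟫_𝕜 :=
    .of_norm_bounded (hS.summable_norm_mul_norm hT) fun i =>
      (norm_re_le_norm _).trans (norm_inner_le_norm _ _)
  simp only [hsNormSq, add_apply, norm_add_sq (𝕜 := 𝕜)]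
  rw [Summable.tsum_add (Summable.add hS (hcross.mul_left 2)) hT,
    Summable.tsum_add hS (hcross.mul_left 2), tsum_mul_left]

theorem hsNormSq_sum_le {κ : Type*} (s : Finset κ) {T : κ → E →L[𝕜] E}
    (hT : ∀ j ∈ s, b.IsHilbertSchmidt (T j)) :
    b.hsNormSq (∑ j ∈ s, T j) ≤ #s * ∑ j ∈ s, b.hsNormSq (T j) := by
  have hpt : ∀ i, ‖(∑ j ∈ s, T j) (b i)‖ ^ 2 ≤ #s * ∑ j ∈ s, ‖T j (b i)‖ ^ 2 := fun i => by
    rw [_root_.sum_apply]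
    exact (pow_le_pow_left₀ (norm_nonneg _) (norm_sum_le _ _) 2).trans
      sq_sum_le_card_mul_sum_sq
  have hsum : Summable fun i => (#s : ℝ) * ∑ j ∈ s, ‖T j (b i)‖ ^ 2 :=
    (summable_sum hT).mul_left _
  calc b.hsNormSq (∑ j ∈ s, T j)
      ≤ ∑' i, (#s : ℝ) * ∑ j ∈ s, ‖T j (b i)‖ ^ 2 :=
        Summable.tsum_le_tsum hpt (.of_nonneg_of_le (fun _ => sq_nonneg _) hpt hsum) hsum
    _ = #s * ∑ j ∈ s, b.hsNormSq (T j) := by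
        rw [tsum_mul_left, Summable.tsum_finsetSum hT]; rfl

theorem SummableDiag.mono {A B : E →L[𝕜] E} (hA : b.SummableDiag A) (hB : 0 ≤ B) (hBA : B ≤ A) :
    b.SummableDiag B := by
  refine .of_nonneg_of_le (fun i => ?_) (fun i => ?_) hA
  · exact ((ContinuousLinearMap.nonneg_iff_isPositive B).1 hB).re_inner_nonneg_right (b i)
  · have := ((ContinuousLinearMap.le_def B A).1 hBA).re_inner_nonneg_right (b i)
    rw [sub_apply, inner_sub_right, map_sub] at this
    linarith

end RCLike

section Positive

variable {ι : Type*} {b : HilbertBasis ι ℂ H}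

theorem SummableDiag.isHilbertSchmidt_sqrt {A : H →L[ℂ] H} (hA : 0 ≤ A) (h : b.SummableDiag A) :
    b.IsHilbertSchmidt (CFC.sqrt A) :=
  Summable.congr h fun i => (norm_sqrt_apply_sq hA (b i)).symm

theorem SummableDiag.isHilbertSchmidt {A : H →L[ℂ] H} (hA : 0 ≤ A) (h : b.SummableDiag A) :
    b.IsHilbertSchmidt A := by
  simpa only [CFC.sqrt_mul_sqrt_self A hA] using
    (h.isHilbertSchmidt_sqrt hA).mul_left (CFC.sqrt A)

/-- Writing `D = E * E` with `E = √D`, cyclicity of the trace turns the Hilbert–Schmidt inner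
product of `C` and `D` into the trace of `E * C * E ≥ 0`. -/
theorem tsum_re_inner_nonneg {C D : H →L[ℂ] H} (hC : 0 ≤ C) (hD : 0 ≤ D)
    (hDs : b.SummableDiag D) : 0 ≤ ∑' i, re ⟪C (b i), D (b i)⟫_ℂ := by
  set E := CFC.sqrt D
  have hE : b.IsHilbertSchmidt E := hDs.isHilbertSchmidt_sqrt hD
  have hCp := (ContinuousLinearMap.nonneg_iff_isPositive C).1 hC
  have hEp := (ContinuousLinearMap.nonneg_iff_isPositive E).1 (CFC.sqrt_nonneg D)
  have hterm : ∀ i, re ⟪C (b i), D (b i)⟫_ℂ = re ⟪b i, (C * E * E) (b i)⟫_ℂ := fun i => by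
    rw [mul_assoc, CFC.sqrt_mul_sqrt_self D hD, hCp.inner_left_eq_inner_right, mul_apply_eq_comp]
  rw [tsum_congr hterm,
    (RCLike.hasSum_re ℂ (hasSum_inner_mul_comm (hE.mul_left C) hE)).tsum_eq,
    RCLike.re_tsum ℂ (hasSum_inner_mul_comm hE (hE.mul_left C)).summable]
  refine tsum_nonneg fun i => ?_
  rw [mul_apply_eq_comp, ← hEp.inner_left_eq_inner_right]
  exact hCp.re_inner_nonneg_right _

theorem hsNormSq_add_hsNormSq_le {C D : H →L[ℂ] H} (hC : 0 ≤ C) (hCs : b.IsHilbertSchmidt C)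
    (hD : 0 ≤ D) (hDs : b.SummableDiag D) :
    b.hsNormSq C + b.hsNormSq D ≤ b.hsNormSq (C + D) := by
  rw [hsNormSq_add hCs (hDs.isHilbertSchmidt hD)]
  linarith [tsum_re_inner_nonneg hC hD hDs]

end Positive

section Greedy

variable {ι : Type*} {b : HilbertBasis ι ℂ H} {A p : H →L[ℂ] H}

theorem SummableDiag.sub_sqrt_mul_mul_sqrt (hA : 0 ≤ A) (hAs : b.SummableDiag A)
    (hp : IsStarProjection p) : b.SummableDiag (A - CFC.sqrt A * p * CFC.sqrt A) :=
  hAs.mono (sub_sqrt_mul_mul_sqrt_nonneg hA hp) (sub_le_self _ (sqrt_mul_mul_sqrt_nonneg hp))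

theorem hsNormSq_le_card_sq_mul {κ : Type*} [Fintype κ] {P : κ → H →L[ℂ] H}
    (hsum : ∑ j, P j = 1) (hA : 0 ≤ A) (hAs : b.SummableDiag A) (j : κ)
    (hmax : ∀ j', b.hsNormSq (CFC.sqrt A * P j' * CFC.sqrt A)
      ≤ b.hsNormSq (CFC.sqrt A * P j * CFC.sqrt A)) :
    b.hsNormSq A ≤ Fintype.card κ ^ 2 * b.hsNormSq (CFC.sqrt A * P j * CFC.sqrt A) := by
  have hdecomp : A = ∑ j', CFC.sqrt A * P j' * CFC.sqrt A := by
    rw [← Finset.sum_mul, ← Finset.mul_sum, hsum, mul_one, CFC.sqrt_mul_sqrt_self A hA]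
  calc b.hsNormSq A
      ≤ Fintype.card κ * ∑ j', b.hsNormSq (CFC.sqrt A * P j' * CFC.sqrt A) := by
        conv_lhs => rw [hdecomp]
        exact hsNormSq_sum_le _ fun j' _ =>
          (hAs.isHilbertSchmidt_sqrt hA).mul_left (CFC.sqrt A * P j')
    _ ≤ Fintype.card κ * (Fintype.card κ * b.hsNormSq (CFC.sqrt A * P j * CFC.sqrt A)) := by
        gcongr
        refine (Finset.sum_le_sum fun j' _ => hmax j').trans_eq ?_
        rw [Finset.sum_const, Finset.card_univ, nsmul_eq_mul]
    _ = _ := by ring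

theorem hsNormSq_sub_sqrt_mul_mul_sqrt_le {κ : Type*} [Fintype κ] {P : κ → H →L[ℂ] H}
    (hP : ∀ j, IsStarProjection (P j)) (hsum : ∑ j, P j = 1) (hA : 0 ≤ A)
    (hAs : b.SummableDiag A) (j : κ)
    (hmax : ∀ j', b.hsNormSq (CFC.sqrt A * P j' * CFC.sqrt A)
      ≤ b.hsNormSq (CFC.sqrt A * P j * CFC.sqrt A)) :
    b.hsNormSq (A - CFC.sqrt A * P j * CFC.sqrt A)
      ≤ (1 - 1 / Fintype.card κ ^ 2) * b.hsNormSq A := by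
  set D := CFC.sqrt A * P j * CFC.sqrt A
  have hD := sqrt_mul_mul_sqrt_nonneg (a := A) (hP j)
  have hpyth : b.hsNormSq (A - D) + b.hsNormSq D ≤ b.hsNormSq A := by
    simpa using hsNormSq_add_hsNormSq_le (sub_sqrt_mul_mul_sqrt_nonneg hA (hP j))
      ((hAs.sub_sqrt_mul_mul_sqrt hA (hP j)).isHilbertSchmidt
        (sub_sqrt_mul_mul_sqrt_nonneg hA (hP j))) hD (hAs.mono hD (sqrt_mul_mul_sqrt_le hA (hP j)))
  have hpig : b.hsNormSq A / Fintype.card κ ^ 2 ≤ b.hsNormSq D :=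
    div_le_of_le_mul₀ (by positivity) (tsum_nonneg fun _ => sq_nonneg _)
      (by linarith [hsNormSq_le_card_sq_mul hsum hA hAs j hmax])
  calc b.hsNormSq (A - D) ≤ b.hsNormSq A - b.hsNormSq A / Fintype.card κ ^ 2 := by linarith
    _ = (1 - 1 / Fintype.card κ ^ 2) * b.hsNormSq A := by ring

end Greedy

end HilbertBasis

theorem hs_greedy_decay_general {ι : Type*} (b : HilbertBasis ι ℂ H)
    {N : ℕ}
    (P : Fin N → H →L[ℂ] H)
    (hsa : ∀ j, IsSelfAdjoint (P j)) (hidem : ∀ j, IsIdempotentElem (P j))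
    (hsum : ∑ j, P j = 1)
    (R : H →L[ℂ] H) (hR : 0 ≤ R)
    (htc : Summable fun i => (inner ℂ (b i) (R (b i)) : ℂ).re)
    (Rseq : ℕ → H →L[ℂ] H) (jsel : ℕ → Fin N)
    (h0 : Rseq 0 = R)
    (hrec : ∀ k, Rseq (k + 1)
      = Rseq k - CFC.sqrt (Rseq k) * P (jsel k) * CFC.sqrt (Rseq k))
    (hgreedy : ∀ k, ∀ j : Fin N,
      ∑' i, ‖(CFC.sqrt (Rseq k) * P j * CFC.sqrt (Rseq k)) (b i)‖ ^ 2
        ≤ ∑' i, ‖(CFC.sqrt (Rseq k) * P (jsel k) * CFC.sqrt (Rseq k)) (b i)‖ ^ 2) :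
    ∀ k, 1 ≤ k →
      ∑' i, ‖Rseq k (b i)‖ ^ 2
        ≤ (1 - 1 / (N : ℝ) ^ 2) ^ k * ∑' i, ‖R (b i)‖ ^ 2 := by
  have hP : ∀ j, IsStarProjection (P j) := fun j => ⟨hidem j, hsa j⟩
  have hinv : ∀ k, 0 ≤ Rseq k ∧ b.SummableDiag (Rseq k) := by
    intro k
    induction k with
    | zero => exact h0 ▸ ⟨hR, htc⟩
    | succ k ih =>
      rw [hrec k]
      exact ⟨sub_sqrt_mul_mul_sqrt_nonneg ih.1 (hP _), ih.2.sub_sqrt_mul_mul_sqrt ih.1 (hP _)⟩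
  have hstep : ∀ k, b.hsNormSq (Rseq (k + 1)) ≤ (1 - 1 / (N : ℝ) ^ 2) * b.hsNormSq (Rseq k) :=
    fun k => by
      simpa only [hrec k, Fintype.card_fin] using
        b.hsNormSq_sub_sqrt_mul_mul_sqrt_le hP hsum (hinv k).1 (hinv k).2 (jsel k) (hgreedy k)
  have hN : (1 : ℝ) ≤ N := by exact_mod_cast (jsel 0).pos
  have hc : 0 ≤ 1 - 1 / (N : ℝ) ^ 2 :=
    sub_nonneg.2 (div_le_one_of_le₀ (one_le_pow₀ hN) (by positivity))
  intro k _
  rw [← h0]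
  exact le_geom (u := fun k => b.hsNormSq (Rseq k)) hc k fun k _ => hstep k

/-- geometric HS decay of the depth-n HS-greedy extraction. -/
theorem hs_greedy_decay {ι : Type*} (b : HilbertBasis ι ℂ H)
    {N : ℕ} (hN : 0 < N)
    (P : Fin N → H →L[ℂ] H)
    (hsa : ∀ j, IsSelfAdjoint (P j)) (hidem : ∀ j, IsIdempotentElem (P j))
    (horth : ∀ j j', j ≠ j' → P j * P j' = 0)
    (hsum : ∑ j, P j = 1)
    (R : H →L[ℂ] H) (hR : 0 ≤ R)
    (htc : Summable fun i => (inner ℂ (b i) (R (b i)) : ℂ).re)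
    (Rseq : ℕ → H →L[ℂ] H) (jsel : ℕ → Fin N)
    (h0 : Rseq 0 = R)
    (hpos : ∀ k, 0 ≤ Rseq k)
    (hrec : ∀ k, Rseq (k + 1)
      = Rseq k - CFC.sqrt (Rseq k) * P (jsel k) * CFC.sqrt (Rseq k))
    (hgreedy : ∀ k, ∀ j : Fin N,
      ∑' i, ‖(CFC.sqrt (Rseq k) * P j * CFC.sqrt (Rseq k)) (b i)‖ ^ 2
        ≤ ∑' i, ‖(CFC.sqrt (Rseq k) * P (jsel k) * CFC.sqrt (Rseq k)) (b i)‖ ^ 2) :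
    ∀ k, 1 ≤ k →
      ∑' i, ‖Rseq k (b i)‖ ^ 2
        ≤ (1 - 1 / (N : ℝ) ^ 2) ^ k * ∑' i, ‖R (b i)‖ ^ 2 :=
  hs_greedy_decay_general b P hsa hidem hsum R hR htc Rseq jsel h0 hrec hgreedy
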